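/- arXiv:1610.05844 — 4 statements merged into one kernel-verified Lean document; each statement's English description precedes it below -/
import Mathlib

section
/- Let φ : (0,R₀) → ℝ be a warp potential and let ρ : ℝ × [0,T] → (0,R₀) be a solution of the Guan–Li flow, 2π-periodic in θ. Then for all θ ∈ ℝ and t ∈ [0,T], min_{θ'} ρ(θ',0) ≤ ρ(θ,t) ≤ max_{θ'} ρ(θ',0). -/
open Real Set MeasureTheory Filter Topology

noncomputable section

/-- `r` lies in the interval `(0, R₀)`, where `R₀ ∈ (0,∞]` is an extended real. -/
def InInterval (R₀ : EReal) (r : ℝ) : Prop := 0 < r ∧ (r : EReal) < R₀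

/-- `φ` is a warp potential on `(0, R₀)`: smooth and positive there. -/
def IsWarpPotential (R₀ : EReal) (φ : ℝ → ℝ) : Prop :=
  ContDiffOn ℝ (⊤ : ℕ∞) φ {r : ℝ | InInterval R₀ r} ∧ ∀ r, InInterval R₀ r → 0 < φ r

/-- `ρ` is a solution of the Guan–Li flow (radial graph form) on `ℝ × I`:
smooth, `2π`-periodic in `θ`, valued in `(0, R₀)`, and satisfying
`ρ_t = (φ(ρ)³ ρ_θθ + φ'(ρ) ρ_θ⁴) / (φ(ρ)(φ(ρ)² + ρ_θ²)^{3/2})`. -/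
def IsGuanLiSolution (R₀ : EReal) (φ : ℝ → ℝ) (I : Set ℝ) (ρ : ℝ → ℝ → ℝ) : Prop :=
  (∀ θ : ℝ, ∀ t ∈ I, InInterval R₀ (ρ θ t)) ∧
  (∀ θ : ℝ, ∀ t ∈ I, ρ (θ + 2 * π) t = ρ θ t) ∧
  ContDiffOn ℝ (⊤ : ℕ∞) (fun p : ℝ × ℝ => ρ p.1 p.2) (univ ×ˢ I) ∧
  (∀ θ : ℝ, ∀ t ∈ I,
    derivWithin (fun t' => ρ θ t') I t =
      (φ (ρ θ t) ^ 3 * deriv (deriv (fun θ' => ρ θ' t)) θ +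
        deriv φ (ρ θ t) * (deriv (fun θ' => ρ θ' t) θ) ^ 4) /
      (φ (ρ θ t) * (φ (ρ θ t) ^ 2 + (deriv (fun θ' => ρ θ' t) θ) ^ 2) ^ ((3 : ℝ) / 2)))

lemma second_deriv_nonpos_of_isLocalMax {f : ℝ → ℝ} (hf : ContDiff ℝ (⊤ : ℕ∞) f) {a : ℝ}
    (h : IsLocalMax f a) : deriv (deriv f) a ≤ 0 := by
  by_contra hpos
  push_neg at hpos
  have hf' : ContDiff ℝ (⊤ : ℕ∞) f := hf.of_le (by simp)
  have hfd : ContDiff ℝ (⊤ : ℕ∞) (deriv f) := (contDiff_infty_iff_deriv.mp hf').2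
  have hD : HasDerivAt (deriv f) (deriv (deriv f) a) a :=
    ((hfd.differentiable (by simp)) a).hasDerivAt
  have h1 : deriv f a = 0 := h.deriv_eq_zero
  have hslope : Tendsto (slope (deriv f) a) (𝓝[≠] a) (𝓝 (deriv (deriv f) a)) :=
    hasDerivAt_iff_tendsto_slope.mp hD
  have hev0 : ∀ᶠ x in 𝓝[≠] a, 0 < slope (deriv f) a x :=
    hslope.eventually (eventually_gt_nhds hpos)
  have hsub : Ioi a ⊆ {a}ᶜ := fun x hx => ne_of_gt hx
  have hev1 : ∀ᶠ x in 𝓝[>] a, 0 < slope (deriv f) a x :=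
    hev0.filter_mono (nhdsWithin_mono a hsub)
  have hev2 : ∀ᶠ x in 𝓝[>] a, 0 < deriv f x := by
    filter_upwards [hev1, eventually_mem_nhdsWithin] with x hx hxa
    rw [slope_def_field, h1, sub_zero] at hx
    rcases div_pos_iff.mp hx with ⟨hn, _⟩ | ⟨_, hd⟩
    · linarith
    · exact absurd hd (by simp [mem_Ioi] at hxa; linarith)
  have hev3 : ∀ᶠ x in 𝓝[>] a, f x ≤ f a := h.filter_mono nhdsWithin_le_nhds
  obtain ⟨b, hab, hIoc⟩ := mem_nhdsGT_iff_exists_Ioc_subset.mp (hev2.and hev3)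
  have hmono : StrictMonoOn f (Icc a b) :=
    strictMonoOn_of_deriv_pos (convex_Icc a b) (hf'.continuous.continuousOn)
      (fun x hx => by rw [interior_Icc] at hx; exact (hIoc ⟨hx.1, hx.2.le⟩).1)
  have hfb : f a < f b :=
    hmono (left_mem_Icc.mpr hab.le) (right_mem_Icc.mpr hab.le) hab
  exact absurd (hIoc ⟨hab, le_refl b⟩).2 (not_le.mpr hfb)

lemma second_deriv_nonneg_of_isLocalMin {f : ℝ → ℝ} (hf : ContDiff ℝ (⊤ : ℕ∞) f) {a : ℝ}
    (h : IsLocalMin f a) : 0 ≤ deriv (deriv f) a := by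
  have hneg := second_deriv_nonpos_of_isLocalMax hf.neg h.neg
  have e1 : deriv (fun x => -f x) = fun x => -deriv f x := funext fun x => deriv.neg
  rw [e1] at hneg
  have e2 : deriv (fun x => -deriv f x) a = -deriv (deriv f) a := deriv.neg
  rw [e2] at hneg
  linarith

/-- `C⁰` estimate (maximum principle): along the Guan–Li flow on
`ℝ × [0,T]`, the radial function stays between the min and max of the initial data. -/
theorem guanLi_C0_estimate
    (R₀ : EReal) (hR₀ : 0 < R₀) (φ : ℝ → ℝ) (hφ : IsWarpPotential R₀ φ)
    (T : ℝ) (hT : 0 ≤ T) (ρ : ℝ → ℝ → ℝ)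
    (hρ : IsGuanLiSolution R₀ φ (Icc 0 T) ρ) :
    ∀ θ : ℝ, ∀ t ∈ Icc (0 : ℝ) T,
      sInf (range (fun θ' => ρ θ' 0)) ≤ ρ θ t ∧
      ρ θ t ≤ sSup (range (fun θ' => ρ θ' 0)) := by

  obtain ⟨hval, hper, hsm, hpde⟩ := hρ
  have h0T : (0 : ℝ) ∈ Icc (0 : ℝ) T := ⟨le_refl 0, hT⟩
  have h2π : (0 : ℝ) < 2 * π := by positivity
  have contθ : ∀ t ∈ Icc (0 : ℝ) T, ContDiff ℝ (⊤ : ℕ∞) (fun θ' => ρ θ' t) := by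
    intro t ht
    rw [← contDiffOn_univ]
    exact hsm.comp ((contDiff_id.prodMk contDiff_const).contDiffOn)
      (fun θ _ => ⟨mem_univ _, ht⟩)
  have contt : ∀ θ : ℝ, ContDiffOn ℝ (⊤ : ℕ∞) (fun t' => ρ θ t') (Icc 0 T) := fun θ =>
    hsm.comp ((contDiff_const.prodMk contDiff_id).contDiffOn)
      (fun t htI => ⟨mem_univ _, htI⟩)
  have hperiodic : ∀ t ∈ Icc (0 : ℝ) T, Function.Periodic (fun θ' => ρ θ' t) (2 * π) :=
    fun t ht θ => hper θ t ht
  have hrange : range (fun θ' => ρ θ' 0) = (fun θ' => ρ θ' 0) '' Icc 0 (2 * π) := by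
    apply Subset.antisymm
    · rintro _ ⟨θ, rfl⟩
      obtain ⟨y, hy, hyeq⟩ := (hperiodic 0 h0T).exists_mem_Ico₀ h2π θ
      exact ⟨y, Ico_subset_Icc_self hy, hyeq.symm⟩
    · exact image_subset_range _ _
  have hbddA : BddAbove (range (fun θ' => ρ θ' 0)) := by
    rw [hrange]
    exact (isCompact_Icc.image (contθ 0 h0T).continuous).bddAbove
  have hbddB : BddBelow (range (fun θ' => ρ θ' 0)) := by
    rw [hrange]
    exact (isCompact_Icc.image (contθ 0 h0T).continuous).bddBelow
  set S := sSup (range (fun θ' => ρ θ' 0)) with hSdef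
  set m := sInf (range (fun θ' => ρ θ' 0)) with hmdef
  have hleS : ∀ θ' : ℝ, ρ θ' 0 ≤ S := fun θ' => le_csSup hbddA ⟨θ', rfl⟩
  have hmle : ∀ θ' : ℝ, m ≤ ρ θ' 0 := fun θ' => csInf_le hbddB ⟨θ', rfl⟩
  have hpow : ∀ r : ℝ, InInterval R₀ r → (φ r ^ 2 + (0:ℝ) ^ 2) ^ ((3:ℝ)/2) = φ r ^ 3 := by
    intro r hr
    have hφr : 0 < φ r := hφ.2 r hr
    rw [show ((0:ℝ) ^ 2) = 0 by norm_num, add_zero,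
      ← Real.rpow_natCast (φ r) 2, ← Real.rpow_mul hφr.le,
      show ((2:ℕ):ℝ) * (3/2) = ((3:ℕ):ℝ) by norm_num, Real.rpow_natCast]
  set K : Set (ℝ × ℝ) := Icc (0:ℝ) (2*π) ×ˢ Icc (0:ℝ) T with hKdef
  have hKc : IsCompact K := isCompact_Icc.prod isCompact_Icc
  have hKne : K.Nonempty := ⟨(0, 0), ⟨⟨le_refl _, h2π.le⟩, h0T⟩⟩
  have hKsub : K ⊆ univ ×ˢ Icc 0 T := prod_mono (subset_univ _) subset_rfl
  -- upper bound
  have keyU : ∀ δ : ℝ, 0 < δ → ∀ θ : ℝ, ∀ t ∈ Icc (0:ℝ) T, ρ θ t - δ * t ≤ S := by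
    intro δ hδ
    have hcont : ContinuousOn (fun p : ℝ × ℝ => ρ p.1 p.2 - δ * p.2) K :=
      ((hsm.continuousOn.mono hKsub)).sub
        ((continuous_const.mul continuous_snd).continuousOn)
    obtain ⟨⟨θ₀, t₀⟩, ⟨hθ₀, ht₀⟩, hp₀⟩ := hKc.exists_isMaxOn hKne hcont
    have hp₀' : ∀ θ' t' : ℝ, (θ', t') ∈ K → ρ θ' t' - δ * t' ≤ ρ θ₀ t₀ - δ * t₀ :=
      fun θ' t' h => hp₀ h
    have hmaxθ : ∀ θ : ℝ, ρ θ t₀ ≤ ρ θ₀ t₀ := by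
      intro θ
      obtain ⟨y, hy, hyeq⟩ := (hperiodic t₀ ht₀).exists_mem_Ico₀ h2π θ
      have h1 := hp₀' y t₀ ⟨Ico_subset_Icc_self hy, ht₀⟩
      have h2 : ρ θ t₀ = ρ y t₀ := hyeq
      linarith
    have ht₀0 : t₀ = 0 := by
      by_contra hne
      have ht₀pos : 0 < t₀ := lt_of_le_of_ne ht₀.1 (Ne.symm hne)
      have hlm : IsLocalMax (fun θ' => ρ θ' t₀) θ₀ := Filter.Eventually.of_forall hmaxθ
      have hd1 : deriv (fun θ' => ρ θ' t₀) θ₀ = 0 := hlm.deriv_eq_zero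
      have hd2 : deriv (deriv (fun θ' => ρ θ' t₀)) θ₀ ≤ 0 :=
        second_deriv_nonpos_of_isLocalMax (contθ t₀ ht₀) hlm
      have hr := hval θ₀ t₀ ht₀
      have hφr : 0 < φ (ρ θ₀ t₀) := hφ.2 _ hr
      set dW := derivWithin (fun t' => ρ θ₀ t') (Icc 0 T) t₀ with hdWdef
      have hRHS : dW ≤ 0 := by
        rw [hdWdef, hpde θ₀ t₀ ht₀, hd1, hpow _ hr]
        rw [show ((0:ℝ) ^ 4) = 0 by norm_num, mul_zero, add_zero]
        refine div_nonpos_iff.mpr (Or.inr ⟨?_, by positivity⟩)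
        nlinarith [pow_pos hφr 3]
      have hdiffW : DifferentiableWithinAt ℝ (fun t' => ρ θ₀ t') (Icc 0 T) t₀ :=
        ((contt θ₀).differentiableOn (by simp)) t₀ ht₀
      have hH : HasDerivWithinAt (fun t' => ρ θ₀ t' - δ * t') (dW - δ) (Icc 0 T) t₀ := by
        have h1 := hdiffW.hasDerivWithinAt
        have h2 : HasDerivWithinAt (fun t' : ℝ => δ * t') δ (Icc 0 T) t₀ := by
          simpa using ((hasDerivAt_id t₀).const_mul δ).hasDerivWithinAt
        exact h1.sub h2
      have hmaxt : IsLocalMaxOn (fun t' => ρ θ₀ t' - δ * t') (Icc 0 T) t₀ :=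
        eventually_nhdsWithin_of_forall (fun t ht => hp₀' θ₀ t ⟨hθ₀, ht⟩)
      have hy : (0 - t₀) ∈ posTangentConeAt (Icc 0 T) t₀ := by
        apply sub_mem_posTangentConeAt_of_segment_subset
        rw [segment_symm, segment_eq_Icc ht₀pos.le]
        exact Icc_subset_Icc_right ht₀.2
      have hnp := hmaxt.hasFDerivWithinAt_nonpos hH.hasFDerivWithinAt hy
      simp at hnp
      nlinarith
    intro θ t ht
    obtain ⟨y, hy, hyeq⟩ := (hperiodic t ht).exists_mem_Ico₀ h2π θ
    have h1 := hp₀' y t ⟨Ico_subset_Icc_self hy, ht⟩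
    rw [ht₀0] at h1
    have h2 : ρ θ t = ρ y t := hyeq
    have h3 : ρ θ₀ 0 ≤ S := hleS θ₀
    linarith
  -- lower bound
  have keyL : ∀ δ : ℝ, 0 < δ → ∀ θ : ℝ, ∀ t ∈ Icc (0:ℝ) T, m ≤ ρ θ t + δ * t := by
    intro δ hδ
    have hcont : ContinuousOn (fun p : ℝ × ℝ => ρ p.1 p.2 + δ * p.2) K :=
      ((hsm.continuousOn.mono hKsub)).add
        ((continuous_const.mul continuous_snd).continuousOn)
    obtain ⟨⟨θ₀, t₀⟩, ⟨hθ₀, ht₀⟩, hp₀⟩ := hKc.exists_isMinOn hKne hcont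
    have hp₀' : ∀ θ' t' : ℝ, (θ', t') ∈ K → ρ θ₀ t₀ + δ * t₀ ≤ ρ θ' t' + δ * t' :=
      fun θ' t' h => hp₀ h
    have hminθ : ∀ θ : ℝ, ρ θ₀ t₀ ≤ ρ θ t₀ := by
      intro θ
      obtain ⟨y, hy, hyeq⟩ := (hperiodic t₀ ht₀).exists_mem_Ico₀ h2π θ
      have h1 := hp₀' y t₀ ⟨Ico_subset_Icc_self hy, ht₀⟩
      have h2 : ρ θ t₀ = ρ y t₀ := hyeq
      linarith
    have ht₀0 : t₀ = 0 := by
      by_contra hne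
      have ht₀pos : 0 < t₀ := lt_of_le_of_ne ht₀.1 (Ne.symm hne)
      have hlm : IsLocalMin (fun θ' => ρ θ' t₀) θ₀ := Filter.Eventually.of_forall hminθ
      have hd1 : deriv (fun θ' => ρ θ' t₀) θ₀ = 0 := hlm.deriv_eq_zero
      have hd2 : 0 ≤ deriv (deriv (fun θ' => ρ θ' t₀)) θ₀ :=
        second_deriv_nonneg_of_isLocalMin (contθ t₀ ht₀) hlm
      have hr := hval θ₀ t₀ ht₀
      have hφr : 0 < φ (ρ θ₀ t₀) := hφ.2 _ hr
      set dW := derivWithin (fun t' => ρ θ₀ t') (Icc 0 T) t₀ with hdWdef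
      have hRHS : 0 ≤ dW := by
        rw [hdWdef, hpde θ₀ t₀ ht₀, hd1, hpow _ hr]
        rw [show ((0:ℝ) ^ 4) = 0 by norm_num, mul_zero, add_zero]
        apply div_nonneg
        · nlinarith [pow_pos hφr 3]
        · positivity
      have hdiffW : DifferentiableWithinAt ℝ (fun t' => ρ θ₀ t') (Icc 0 T) t₀ :=
        ((contt θ₀).differentiableOn (by simp)) t₀ ht₀
      have hH : HasDerivWithinAt (fun t' => ρ θ₀ t' + δ * t') (dW + δ) (Icc 0 T) t₀ := by
        have h1 := hdiffW.hasDerivWithinAt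
        have h2 : HasDerivWithinAt (fun t' : ℝ => δ * t') δ (Icc 0 T) t₀ := by
          simpa using ((hasDerivAt_id t₀).const_mul δ).hasDerivWithinAt
        exact h1.add h2
      have hmint : IsLocalMinOn (fun t' => ρ θ₀ t' + δ * t') (Icc 0 T) t₀ :=
        eventually_nhdsWithin_of_forall (fun t ht => hp₀' θ₀ t ⟨hθ₀, ht⟩)
      have hy : (0 - t₀) ∈ posTangentConeAt (Icc 0 T) t₀ := by
        apply sub_mem_posTangentConeAt_of_segment_subset
        rw [segment_symm, segment_eq_Icc ht₀pos.le]
        exact Icc_subset_Icc_right ht₀.2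
      have hnn := hmint.hasFDerivWithinAt_nonneg hH.hasFDerivWithinAt hy
      simp at hnn
      nlinarith
    intro θ t ht
    obtain ⟨y, hy, hyeq⟩ := (hperiodic t ht).exists_mem_Ico₀ h2π θ
    have h1 := hp₀' y t ⟨Ico_subset_Icc_self hy, ht⟩
    rw [ht₀0] at h1
    have h2 : ρ θ t = ρ y t := hyeq
    have h3 : m ≤ ρ θ₀ 0 := hmle θ₀
    linarith
  -- conclude
  intro θ t ht
  have hT1 : (0:ℝ) < T + 1 := by linarith
  constructor
  · by_contra hcon
    push_neg at hcon
    have hδpos : 0 < (m - ρ θ t) / (2 * (T + 1)) := by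
      apply div_pos (by linarith) (by linarith)
    have h1 := keyL _ hδpos θ t ht
    have h2 : (m - ρ θ t) / (2 * (T + 1)) * t ≤ (m - ρ θ t) / (2 * (T + 1)) * (T + 1) :=
      mul_le_mul_of_nonneg_left (by linarith [ht.2]) hδpos.le
    have h3 : (m - ρ θ t) / (2 * (T + 1)) * (T + 1) = (m - ρ θ t) / 2 := by
      field_simp
    linarith
  · by_contra hcon
    push_neg at hcon
    have hδpos : 0 < (ρ θ t - S) / (2 * (T + 1)) := by
      apply div_pos (by linarith) (by linarith)
    have h1 := keyU _ hδpos θ t ht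
    have h2 : (ρ θ t - S) / (2 * (T + 1)) * t ≤ (ρ θ t - S) / (2 * (T + 1)) * (T + 1) :=
      mul_le_mul_of_nonneg_left (by linarith [ht.2]) hδpos.le
    have h3 : (ρ θ t - S) / (2 * (T + 1)) * (T + 1) = (ρ θ t - S) / 2 := by
      field_simp
    linarith
end
end

section
/- Let φ : (0,R₀) → ℝ be a warp potential satisfying φ'(r)² − φ(r)φ''(r) > 0 for all r, and let ρ : ℝ × [0,T] → (0,R₀) be a solution of the Guan–Li flow, 2π-periodic in θ. Then for every t ∈ [0,T], sup_θ ρ_θ(θ,t)² ≤ sup_θ ρ_θ(θ,0)². -/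
open Real Set MeasureTheory Filter

noncomputable section

open Topology

namespace GuanLiAux

lemma slice1_hasDerivAt {g : ℝ × ℝ → ℝ} {S : Set (ℝ × ℝ)} {θ t : ℝ}
    (hg : DifferentiableWithinAt ℝ g S (θ, t)) (hmem : ∀ θ' : ℝ, (θ', t) ∈ S) :
    HasDerivAt (fun θ' => g (θ', t)) (fderivWithin ℝ g S (θ, t) (1, 0)) θ := by
  have h1 : HasFDerivAt (fun θ' : ℝ => (θ', t)) (ContinuousLinearMap.inl ℝ ℝ ℝ) θ :=
    hasFDerivAt_prodMk_left θ t
  have h2 := hg.hasFDerivWithinAt.comp θ (h1.hasFDerivWithinAt (s := univ))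
    (fun x _ => hmem x)
  rw [hasFDerivWithinAt_univ] at h2
  simpa [Function.comp_def] using h2.hasDerivAt

lemma slice2_hasDerivWithinAt {g : ℝ × ℝ → ℝ} {S : Set (ℝ × ℝ)} {I : Set ℝ} {θ t : ℝ}
    (hg : DifferentiableWithinAt ℝ g S (θ, t)) (hmem : ∀ t' ∈ I, (θ, t') ∈ S) (_ht : t ∈ I) :
    HasDerivWithinAt (fun t' => g (θ, t')) (fderivWithin ℝ g S (θ, t) (0, 1)) I t := by
  have h1 : HasFDerivAt (fun t' : ℝ => (θ, t')) (ContinuousLinearMap.inr ℝ ℝ ℝ) t :=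
    hasFDerivAt_prodMk_right θ t
  have h2 := hg.hasFDerivWithinAt.comp t (h1.hasFDerivWithinAt (s := I))
    (fun x hx => hmem x hx)
  simpa [Function.comp_def] using h2.hasDerivWithinAt

lemma second_deriv_nonpos_of_isLocalMax {f f' : ℝ → ℝ} {a c : ℝ}
    (hmax : IsLocalMax f a) (hf : ∀ x, HasDerivAt f (f' x) x) (hf' : HasDerivAt f' c a) :
    c ≤ 0 := by
  by_contra hc
  push_neg at hc
  have ha : f' a = 0 := hmax.hasDerivAt_eq_zero (hf a)
  have hs := hasDerivAt_iff_tendsto_slope.1 hf'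
  have h1 : ∀ᶠ x in 𝓝[>] a, 0 < slope f' a x :=
    (hs.eventually (eventually_gt_nhds hc)).filter_mono
      (nhdsWithin_mono a fun x hx => ne_of_gt hx)
  have h2 : ∀ᶠ x in 𝓝[>] a, 0 < f' x := by
    filter_upwards [h1, self_mem_nhdsWithin] with x hx hxa
    have hxa' : (0:ℝ) < x - a := sub_pos.2 hxa
    have : 0 < (f' x - f' a) / (x - a) := by rwa [slope_def_field] at hx
    have h5 := mul_pos this hxa'
    rw [div_mul_cancel₀ _ (ne_of_gt hxa')] at h5
    linarith
  obtain ⟨b, hb, hsub⟩ := mem_nhdsGT_iff_exists_Ioo_subset.1 h2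
  have hcont : Continuous f := Differentiable.continuous fun x => (hf x).differentiableAt
  have hmono : StrictMonoOn f (Icc a b) := by
    apply strictMonoOn_of_deriv_pos (convex_Icc a b) hcont.continuousOn
    intro x hx
    rw [interior_Icc] at hx
    rw [(hf x).deriv]
    exact hsub hx
  have h3 : ∀ᶠ x in 𝓝[>] a, f x ≤ f a := hmax.filter_mono nhdsWithin_le_nhds
  have h4 : ∀ᶠ x in 𝓝[>] a, x ∈ Ioo a b := Ioo_mem_nhdsGT_of_mem ⟨le_refl a, hb⟩
  obtain ⟨x, hx1, hx2⟩ := (h3.and h4).exists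
  have := hmono ⟨le_refl a, le_of_lt hb⟩ ⟨hx2.1.le, hx2.2.le⟩ hx2.1
  linarith

lemma numerator_nonpos (Pv P' P'' u c3 A12 : ℝ) (hPv : 0 < Pv)
    (huc : u * c3 ≤ 0) (hkey : Pv * P'' ≤ P' ^ 2) (hA12 : 0 ≤ A12) :
    2 * u * ((Pv ^ 3 * c3 + P'' * u ^ 5) * (Pv * ((Pv ^ 2 + u ^ 2) * A12)) -
      P' * u ^ 4 * (P' * u * ((Pv ^ 2 + u ^ 2) * A12) +
        3 * Pv ^ 2 * P' * u * A12)) ≤ 0 := by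
  have hA : (0:ℝ) ≤ Pv ^ 2 + u ^ 2 := by positivity
  have h1 : Pv ^ 4 * (Pv ^ 2 + u ^ 2) * A12 * (u * c3) ≤ 0 :=
    mul_nonpos_of_nonneg_of_nonpos (by positivity) huc
  have e2 : (Pv * P'' - P' ^ 2) * (Pv ^ 2 + u ^ 2) ≤ 0 :=
    mul_nonpos_of_nonpos_of_nonneg (by linarith) hA
  have h2 : u ^ 6 * A12 * ((Pv * P'' - P' ^ 2) * (Pv ^ 2 + u ^ 2)) ≤ 0 :=
    mul_nonpos_of_nonneg_of_nonpos (by positivity) e2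
  have h3 : (0:ℝ) ≤ u ^ 6 * A12 * (Pv ^ 2 * P' ^ 2) := by positivity
  nlinarith [h1, h2, h3]

end GuanLiAux

open GuanLiAux

/-- Gradient estimate: if `φ'² − φφ'' > 0` on `(0,R₀)`, then along the
Guan–Li flow on `ℝ × [0,T]`, `sup_θ ρ_θ(θ,t)² ≤ sup_θ ρ_θ(θ,0)²`. -/
theorem guanLi_gradient_estimate
    (R₀ : EReal) (hR₀ : 0 < R₀) (φ : ℝ → ℝ) (hφ : IsWarpPotential R₀ φ)
    (hβ : ∀ r, InInterval R₀ r → 0 < (deriv φ r) ^ 2 - φ r * deriv (deriv φ) r)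
    (T : ℝ) (hT : 0 ≤ T) (ρ : ℝ → ℝ → ℝ)
    (hρ : IsGuanLiSolution R₀ φ (Icc 0 T) ρ) :
    ∀ t ∈ Icc (0 : ℝ) T,
      (⨆ θ : ℝ, (deriv (fun θ' => ρ θ' t) θ) ^ 2) ≤
      (⨆ θ : ℝ, (deriv (fun θ' => ρ θ' 0) θ) ^ 2) := by
  obtain ⟨hval, hper, hsmooth, hpde⟩ := hρ
  rcases eq_or_lt_of_le hT with hT0 | hTpos
  · intro t ht
    have ht0 : t = 0 := le_antisymm (hT0 ▸ ht.2) ht.1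
    rw [ht0]
  -- Main case: 0 < T
  set S : Set (ℝ × ℝ) := univ ×ˢ Icc (0:ℝ) T with hSdef
  set F : ℝ × ℝ → ℝ := fun p => ρ p.1 p.2 with hFdef
  set F1 : ℝ × ℝ → ℝ := fun p => fderivWithin ℝ F S p (1, 0) with hF1def
  set F2 : ℝ × ℝ → ℝ := fun p => fderivWithin ℝ F S p (0, 1) with hF2def
  set F11 : ℝ × ℝ → ℝ := fun p => fderivWithin ℝ F1 S p (1, 0) with hF11def
  set F111 : ℝ × ℝ → ℝ := fun p => fderivWithin ℝ F11 S p (1, 0) with hF111def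
  have hSu : UniqueDiffOn ℝ S := uniqueDiffOn_univ.prod (uniqueDiffOn_Icc hTpos)
  have hmemS : ∀ (θ t : ℝ), t ∈ Icc (0:ℝ) T → (θ, t) ∈ S := fun θ t ht => ⟨mem_univ _, ht⟩
  have hFsmooth : ContDiffOn ℝ (⊤ : ℕ∞) F S := hsmooth
  have hF1smooth : ContDiffOn ℝ (⊤ : ℕ∞) F1 S :=
    (hFsmooth.fderivWithin hSu (by simp)).clm_apply contDiffOn_const
  have hF2smooth : ContDiffOn ℝ (⊤ : ℕ∞) F2 S :=
    (hFsmooth.fderivWithin hSu (by simp)).clm_apply contDiffOn_const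
  have hF11smooth : ContDiffOn ℝ (⊤ : ℕ∞) F11 S :=
    (hF1smooth.fderivWithin hSu (by simp)).clm_apply contDiffOn_const
  have hFdiff : DifferentiableOn ℝ F S := hFsmooth.differentiableOn (by simp)
  have hF1diff : DifferentiableOn ℝ F1 S := hF1smooth.differentiableOn (by simp)
  have hF2diff : DifferentiableOn ℝ F2 S := hF2smooth.differentiableOn (by simp)
  have hF11diff : DifferentiableOn ℝ F11 S := hF11smooth.differentiableOn (by simp)
  -- slice derivatives
  have hd1 : ∀ (θ t : ℝ), t ∈ Icc (0:ℝ) T → HasDerivAt (fun θ' => ρ θ' t) (F1 (θ, t)) θ :=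
    fun θ t ht => slice1_hasDerivAt (hFdiff _ (hmemS θ t ht)) (fun θ' => hmemS θ' t ht)
  have h1 : ∀ (θ t : ℝ), t ∈ Icc (0:ℝ) T → deriv (fun θ' => ρ θ' t) θ = F1 (θ, t) :=
    fun θ t ht => (hd1 θ t ht).deriv
  have hd11 : ∀ (θ t : ℝ), t ∈ Icc (0:ℝ) T →
      HasDerivAt (fun θ' => F1 (θ', t)) (F11 (θ, t)) θ :=
    fun θ t ht => slice1_hasDerivAt (hF1diff _ (hmemS θ t ht)) (fun θ' => hmemS θ' t ht)
  have hd111 : ∀ (θ t : ℝ), t ∈ Icc (0:ℝ) T →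
      HasDerivAt (fun θ' => F11 (θ', t)) (F111 (θ, t)) θ :=
    fun θ t ht => slice1_hasDerivAt (hF11diff _ (hmemS θ t ht)) (fun θ' => hmemS θ' t ht)
  have h11 : ∀ (θ t : ℝ), t ∈ Icc (0:ℝ) T →
      deriv (deriv (fun θ' => ρ θ' t)) θ = F11 (θ, t) := by
    intro θ t ht
    have e : deriv (fun θ' => ρ θ' t) = fun θ' => F1 (θ', t) := funext fun θ' => h1 θ' t ht
    rw [e]
    exact (hd11 θ t ht).deriv
  have hd2 : ∀ (θ t : ℝ), t ∈ Icc (0:ℝ) T →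
      HasDerivWithinAt (fun t' => ρ θ t') (F2 (θ, t)) (Icc 0 T) t :=
    fun θ t ht => slice2_hasDerivWithinAt (hFdiff _ (hmemS θ t ht))
      (fun t' ht' => hmemS θ t' ht') ht
  have hPDE : ∀ (θ t : ℝ), t ∈ Icc (0:ℝ) T →
      F2 (θ, t) = (φ (ρ θ t) ^ 3 * F11 (θ, t) + deriv φ (ρ θ t) * (F1 (θ, t)) ^ 4) /
        (φ (ρ θ t) * (φ (ρ θ t) ^ 2 + (F1 (θ, t)) ^ 2) ^ ((3 : ℝ) / 2)) := by
    intro θ t ht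
    rw [← (hd2 θ t ht).derivWithin (uniqueDiffOn_Icc hTpos t ht), ← h1 θ t ht, ← h11 θ t ht]
    exact hpde θ t ht
  -- symmetry of mixed second derivatives
  have hsymm : ∀ (θ t : ℝ), t ∈ Icc (0:ℝ) T →
      fderivWithin ℝ F1 S (θ, t) (0, 1) = fderivWithin ℝ F2 S (θ, t) (1, 0) := by
    intro θ t ht
    have hSc : Convex ℝ S := convex_univ.prod (convex_Icc 0 T)
    have hint : interior S = univ ×ˢ Ioo (0:ℝ) T := by
      rw [hSdef, interior_prod_eq, interior_univ, interior_Icc]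
    have hne : (interior S).Nonempty := by
      rw [hint]
      exact ⟨(0, T / 2), mem_univ _, by constructor <;> linarith⟩
    have hΦdiff : DifferentiableWithinAt ℝ (fun p => fderivWithin ℝ F S p) S (θ, t) :=
      ((hFsmooth.fderivWithin (m := (⊤ : ℕ∞)) hSu (by simp)).differentiableOn (by simp)) _ (hmemS θ t ht)
    have hx : HasFDerivWithinAt (fun p => fderivWithin ℝ F S p)
        (fderivWithin ℝ (fun p => fderivWithin ℝ F S p) S (θ, t)) (interior S) (θ, t) :=
      hΦdiff.hasFDerivWithinAt.mono interior_subset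
    have hder : ∀ x ∈ interior S, HasFDerivAt F (fderivWithin ℝ F S x) x := by
      intro x hx'
      exact (hFdiff x (interior_subset hx')).hasFDerivWithinAt.hasFDerivAt
        (mem_interior_iff_mem_nhds.1 hx')
    have hsym := hSc.second_derivative_within_at_symmetric hne hder (hmemS θ t ht) hx
    have e1 : fderivWithin ℝ F1 S (θ, t) =
        ((fderivWithin ℝ F S (θ, t)).comp (0 : ℝ × ℝ →L[ℝ] ℝ × ℝ)) +
          (fderivWithin ℝ (fun p => fderivWithin ℝ F S p) S (θ, t)).flip ((1:ℝ), (0:ℝ)) :=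
      (hΦdiff.hasFDerivWithinAt.clm_apply
        (hasFDerivWithinAt_const _ _ _)).fderivWithin (hSu _ (hmemS θ t ht))
    have e2 : fderivWithin ℝ F2 S (θ, t) =
        ((fderivWithin ℝ F S (θ, t)).comp (0 : ℝ × ℝ →L[ℝ] ℝ × ℝ)) +
          (fderivWithin ℝ (fun p => fderivWithin ℝ F S p) S (θ, t)).flip ((0:ℝ), (1:ℝ)) :=
      (hΦdiff.hasFDerivWithinAt.clm_apply
        (hasFDerivWithinAt_const _ _ _)).fderivWithin (hSu _ (hmemS θ t ht))
    rw [e1, e2]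
    simpa using hsym (0, 1) (1, 0)
  -- periodicity of the θ-derivative
  have hperiodic : ∀ t : ℝ, t ∈ Icc (0:ℝ) T →
      Function.Periodic (fun θ => F1 (θ, t)) (2 * π) := by
    intro t ht θ
    have e : (fun θ' : ℝ => ρ (θ' + 2 * π) t) = fun θ' => ρ θ' t :=
      funext fun θ' => hper θ' t ht
    have h2 : deriv (fun θ' => ρ θ' t) (θ + 2 * π) = deriv (fun θ' => ρ θ' t) θ := by
      rw [← deriv_comp_add_const (f := fun θ' => ρ θ' t) (a := 2 * π) (x := θ)]
      exact congrFun (congrArg deriv e) θ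
    simp only at h2 ⊢
    rw [← h1 (θ + 2 * π) t ht, ← h1 θ t ht]
    exact h2
  -- continuity and boundedness of the squared derivative slices
  have hF1contSlice : ∀ t : ℝ, t ∈ Icc (0:ℝ) T → Continuous (fun θ => F1 (θ, t)) := by
    intro t ht
    exact (hF1smooth.continuousOn).comp_continuous
      (continuous_id.prodMk continuous_const) (fun θ => hmemS θ t ht)
  have hbdd : ∀ t : ℝ, t ∈ Icc (0:ℝ) T →
      BddAbove (range fun θ : ℝ => (F1 (θ, t)) ^ 2) := by
    intro t ht
    have hcont : Continuous (fun θ : ℝ => (F1 (θ, t)) ^ 2) := (hF1contSlice t ht).pow 2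
    have himg : BddAbove ((fun θ : ℝ => (F1 (θ, t)) ^ 2) '' (Icc 0 (2 * π))) :=
      (isCompact_Icc.image hcont).bddAbove
    refine himg.mono ?_
    rintro y ⟨θ, rfl⟩
    obtain ⟨z, hz, hez⟩ := ((hperiodic t ht).comp (fun x : ℝ => x ^ 2)).exists_mem_Ico₀
      two_pi_pos θ
    exact ⟨z, Ico_subset_Icc_self hz, hez.symm⟩
  -- key claim
  have key : ∀ t₁ ∈ Icc (0:ℝ) T, ∀ θs : ℝ,
      (F1 (θs, t₁)) ^ 2 ≤ ⨆ θ : ℝ, (F1 (θ, 0)) ^ 2 := by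
    intro t₁ ht₁ θs
    by_contra hgt
    push_neg at hgt
    set M0 : ℝ := ⨆ θ : ℝ, (F1 (θ, 0)) ^ 2 with hM0
    have h0T : (0:ℝ) ∈ Icc (0:ℝ) T := ⟨le_refl 0, hTpos.le⟩
    have hle0 : ∀ θ : ℝ, (F1 (θ, 0)) ^ 2 ≤ M0 := fun θ => le_ciSup (hbdd 0 h0T) θ
    have hM0nn : 0 ≤ M0 := le_trans (sq_nonneg _) (hle0 0)
    have ht1pos : 0 < t₁ := by
      rcases lt_or_eq_of_le ht₁.1 with h | h
      · exact h
      · exact absurd (h ▸ hle0 θs) (not_le.2 hgt)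
    set ε : ℝ := ((F1 (θs, t₁)) ^ 2 - M0) / (2 * t₁) with hεdef
    have hεpos : 0 < ε := div_pos (by linarith) (by linarith)
    set K : Set (ℝ × ℝ) := Icc (0:ℝ) (2 * π) ×ˢ Icc (0:ℝ) t₁ with hKdef
    have hKS : K ⊆ S := prod_mono (subset_univ _) (Icc_subset_Icc le_rfl ht₁.2)
    have hKc : IsCompact K := isCompact_Icc.prod isCompact_Icc
    have hKne : ((0:ℝ), (0:ℝ)) ∈ K :=
      ⟨⟨le_refl 0, by positivity⟩, ⟨le_refl 0, ht1pos.le⟩⟩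
    have hgc : ContinuousOn (fun p : ℝ × ℝ => (F1 p) ^ 2 - ε * p.2) K :=
      (((hF1smooth.continuousOn).mono hKS).pow 2).sub
        ((continuous_const.mul continuous_snd).continuousOn)
    obtain ⟨p₀, hp₀K, hp₀max⟩ := hKc.exists_isMaxOn ⟨_, hKne⟩ hgc
    obtain ⟨θ₀, t₀⟩ := p₀
    have ht₀1 : t₀ ∈ Icc (0:ℝ) t₁ := hp₀K.2
    have ht₀T : t₀ ∈ Icc (0:ℝ) T := ⟨ht₀1.1, ht₀1.2.trans ht₁.2⟩
    -- reduction via periodicity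
    have hred : ∀ (θ t : ℝ), t ∈ Icc (0:ℝ) t₁ →
        (F1 (θ, t)) ^ 2 - ε * t ≤ (F1 (θ₀, t₀)) ^ 2 - ε * t₀ := by
      intro θ t ht
      have htT : t ∈ Icc (0:ℝ) T := ⟨ht.1, ht.2.trans ht₁.2⟩
      obtain ⟨z, hz, hez⟩ := ((hperiodic t htT).comp (fun x : ℝ => x ^ 2)).exists_mem_Ico₀
        two_pi_pos θ
      have hmem : ((z, t) : ℝ × ℝ) ∈ K := ⟨Ico_subset_Icc_self hz, ht⟩
      have := hp₀max hmem
      simp only [Function.comp] at hez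
      simpa [hez] using this
    have hgt0 : M0 < (F1 (θ₀, t₀)) ^ 2 - ε * t₀ := by
      have h2t : (F1 (θs, t₁)) ^ 2 - M0 = 2 * t₁ * ε := by
        rw [hεdef]; field_simp
      have hr := hred θs t₁ ⟨ht₁.1, le_rfl⟩
      nlinarith [mul_pos hεpos ht1pos, ht₀1.2, hεpos]
    have ht₀pos : 0 < t₀ := by
      rcases lt_or_eq_of_le ht₀1.1 with h | h
      · exact h
      · exfalso
        have := hle0 θ₀
        rw [← h] at hgt0
        simp at hgt0
        linarith
    have hu₀ : F1 (θ₀, t₀) ≠ 0 := by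
      intro h0
      rw [h0] at hgt0
      have := mul_pos hεpos ht₀pos
      simp at hgt0
      linarith
    have hlocmax : IsLocalMax (fun θ => (F1 (θ, t₀)) ^ 2) θ₀ := by
      apply Filter.Eventually.of_forall
      intro θ
      have := hred θ t₀ ht₀1
      simpa using this
    -- θ-derivative facts at the max point
    have hb := hd11 θ₀ t₀ ht₀T
    have hc3 := hd111 θ₀ t₀ ht₀T
    have hf : ∀ x : ℝ, HasDerivAt (fun θ => (F1 (θ, t₀)) ^ 2)
        (2 * F1 (x, t₀) * F11 (x, t₀)) x := by
      intro x
      have hx := (hd11 x t₀ ht₀T).pow 2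
      norm_num at hx
      exact hx
    have hq0 : F11 (θ₀, t₀) = 0 := by
      have hzero := hlocmax.deriv_eq_zero
      rw [(hf θ₀).deriv] at hzero
      rcases mul_eq_zero.1 hzero with h | h
      · rcases mul_eq_zero.1 h with h' | h'
        · norm_num at h'
        · exact absurd h' hu₀
      · exact h
    have huc : F1 (θ₀, t₀) * F111 (θ₀, t₀) ≤ 0 := by
      have hf' : HasDerivAt (fun x : ℝ => 2 * F1 (x, t₀) * F11 (x, t₀))
          (2 * (F11 (θ₀, t₀) * F11 (θ₀, t₀) + F1 (θ₀, t₀) * F111 (θ₀, t₀))) θ₀ := by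
        have := (hb.mul hc3).const_mul (2:ℝ)
        simpa [mul_assoc] using this
      have hle := second_deriv_nonpos_of_isLocalMax hlocmax hf hf'
      rw [hq0] at hle
      nlinarith [hle]
    -- time derivative lower bound at the max point
    have hmt : HasDerivWithinAt (fun t' => (F1 (θ₀, t')) ^ 2)
        (2 * F1 (θ₀, t₀) * fderivWithin ℝ F1 S (θ₀, t₀) (0, 1)) (Icc 0 T) t₀ := by
      have hsl := slice2_hasDerivWithinAt (hF1diff _ (hmemS θ₀ t₀ ht₀T))
        (fun t' ht' => hmemS θ₀ t' ht') ht₀T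
      have h2 := hsl.pow 2
      norm_num at h2
      exact h2
    have hlow : ε ≤ 2 * F1 (θ₀, t₀) * fderivWithin ℝ F1 S (θ₀, t₀) (0, 1) := by
      have hstep := hasDerivWithinAt_iff_tendsto_slope.1 hmt
      have hss : Ico (0:ℝ) t₀ ⊆ (Icc (0:ℝ) T \ {t₀}) := fun s hs =>
        ⟨⟨hs.1, hs.2.le.trans ht₀T.2⟩, ne_of_lt hs.2⟩
      haveI hne : (𝓝[Ico (0:ℝ) t₀] t₀).NeBot := right_nhdsWithin_Ico_neBot ht₀pos
      refine ge_of_tendsto (hstep.mono_left (nhdsWithin_mono t₀ hss)) ?_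
      filter_upwards [self_mem_nhdsWithin] with s hs
      have hsmem : s ∈ Icc (0:ℝ) t₁ := ⟨hs.1, hs.2.le.trans ht₀1.2⟩
      have hr := hred θ₀ s hsmem
      have hslt : s - t₀ < 0 := sub_neg.2 hs.2
      rw [slope_def_field, le_div_iff_of_neg hslt]
      nlinarith [hr]
    -- identify the time derivative of F1 with a θ-derivative of F2
    have hmveq : fderivWithin ℝ F1 S (θ₀, t₀) (0, 1) = deriv (fun θ => F2 (θ, t₀)) θ₀ := by
      rw [hsymm θ₀ t₀ ht₀T]
      exact ((slice1_hasDerivAt (hF2diff _ (hmemS θ₀ t₀ ht₀T))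
        (fun θ' => hmemS θ' t₀ ht₀T)).deriv).symm
    -- differentiate the PDE right-hand side in θ at the max point
    have hrin : InInterval R₀ (ρ θ₀ t₀) := hval θ₀ t₀ ht₀T
    have hφpos : 0 < φ (ρ θ₀ t₀) := hφ.2 _ hrin
    have hUopen : IsOpen {r : ℝ | InInterval R₀ r} := by
      have he : {r : ℝ | InInterval R₀ r} = Ioi 0 ∩ ((↑) : ℝ → EReal) ⁻¹' Iio R₀ := rfl
      rw [he]
      exact isOpen_Ioi.inter (isOpen_Iio.preimage continuous_coe_real_ereal)
    have hφat : HasDerivAt φ (deriv φ (ρ θ₀ t₀)) (ρ θ₀ t₀) :=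
      ((hφ.1.contDiffAt (hUopen.mem_nhds hrin)).differentiableAt (by simp)).hasDerivAt
    have hφ'C : ContDiffOn ℝ (⊤ : ℕ∞) (deriv φ) {r | InInterval R₀ r} :=
      hφ.1.deriv_of_isOpen hUopen (by simp)
    have hφ'at : HasDerivAt (deriv φ) (deriv (deriv φ) (ρ θ₀ t₀)) (ρ θ₀ t₀) :=
      ((hφ'C.contDiffAt (hUopen.mem_nhds hrin)).differentiableAt (by simp)).hasDerivAt
    have ha : HasDerivAt (fun θ => ρ θ t₀) (F1 (θ₀, t₀)) θ₀ := hd1 θ₀ t₀ ht₀T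
    have hφa : HasDerivAt (fun θ => φ (ρ θ t₀))
        (deriv φ (ρ θ₀ t₀) * F1 (θ₀, t₀)) θ₀ := by
      simpa [Function.comp_def] using hφat.comp θ₀ ha
    have hφ'a : HasDerivAt (fun θ => deriv φ (ρ θ t₀))
        (deriv (deriv φ) (ρ θ₀ t₀) * F1 (θ₀, t₀)) θ₀ := by
      simpa [Function.comp_def] using hφ'at.comp θ₀ ha
    have hApos : 0 < φ (ρ θ₀ t₀) ^ 2 + F1 (θ₀, t₀) ^ 2 :=
      add_pos_of_pos_of_nonneg (pow_pos hφpos 2) (sq_nonneg _)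
    have hnum := ((hφa.pow 3).mul hc3).add (hφ'a.mul (hb.pow 4))
    have hinner := (hφa.pow 2).add (hb.pow 2)
    have hrpow : HasDerivAt (fun x : ℝ => x ^ ((3:ℝ)/2))
        ((3:ℝ)/2 * (φ (ρ θ₀ t₀) ^ 2 + F1 (θ₀, t₀) ^ 2) ^ ((3:ℝ)/2 - 1))
        (φ (ρ θ₀ t₀) ^ 2 + F1 (θ₀, t₀) ^ 2) :=
      Real.hasDerivAt_rpow_const (Or.inl hApos.ne')
    have hrpowc := hrpow.comp θ₀ hinner
    have hden := hφa.mul hrpowc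
    have hdenne : φ (ρ θ₀ t₀) * (φ (ρ θ₀ t₀) ^ 2 + F1 (θ₀, t₀) ^ 2) ^ ((3:ℝ)/2) ≠ 0 :=
      (mul_pos hφpos (rpow_pos_of_pos hApos _)).ne'
    have hdiv := hnum.div hden hdenne
    have hfunPDE : (fun θ => F2 (θ, t₀)) = fun θ =>
        (φ (ρ θ t₀) ^ 3 * F11 (θ, t₀) + deriv φ (ρ θ t₀) * (F1 (θ, t₀)) ^ 4) /
        (φ (ρ θ t₀) * (φ (ρ θ t₀) ^ 2 + (F1 (θ, t₀)) ^ 2) ^ ((3:ℝ)/2)) :=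
      funext fun θ => hPDE θ t₀ ht₀T
    have hA32eq : (φ (ρ θ₀ t₀) ^ 2 + F1 (θ₀, t₀) ^ 2) ^ ((3:ℝ)/2) =
        (φ (ρ θ₀ t₀) ^ 2 + F1 (θ₀, t₀) ^ 2) *
          (φ (ρ θ₀ t₀) ^ 2 + F1 (θ₀, t₀) ^ 2) ^ ((1:ℝ)/2) := by
      rw [← Real.rpow_one_add' hApos.le (by norm_num : (1:ℝ) + 1/2 ≠ 0)]
      norm_num
    have hclean : HasDerivAt (fun θ => F2 (θ, t₀))
        (((φ (ρ θ₀ t₀) ^ 3 * F111 (θ₀, t₀) +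
            deriv (deriv φ) (ρ θ₀ t₀) * F1 (θ₀, t₀) ^ 5) *
              (φ (ρ θ₀ t₀) * ((φ (ρ θ₀ t₀) ^ 2 + F1 (θ₀, t₀) ^ 2) *
                (φ (ρ θ₀ t₀) ^ 2 + F1 (θ₀, t₀) ^ 2) ^ ((1:ℝ)/2))) -
          (deriv φ (ρ θ₀ t₀) * F1 (θ₀, t₀) ^ 4) *
            (deriv φ (ρ θ₀ t₀) * F1 (θ₀, t₀) *
                ((φ (ρ θ₀ t₀) ^ 2 + F1 (θ₀, t₀) ^ 2) *
                  (φ (ρ θ₀ t₀) ^ 2 + F1 (θ₀, t₀) ^ 2) ^ ((1:ℝ)/2)) +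
              3 * φ (ρ θ₀ t₀) ^ 2 * deriv φ (ρ θ₀ t₀) * F1 (θ₀, t₀) *
                (φ (ρ θ₀ t₀) ^ 2 + F1 (θ₀, t₀) ^ 2) ^ ((1:ℝ)/2))) /
          (φ (ρ θ₀ t₀) * ((φ (ρ θ₀ t₀) ^ 2 + F1 (θ₀, t₀) ^ 2) *
            (φ (ρ θ₀ t₀) ^ 2 + F1 (θ₀, t₀) ^ 2) ^ ((1:ℝ)/2))) ^ 2) θ₀ := by
      rw [hfunPDE]
      refine hdiv.congr_deriv ?_
      simp only [Function.comp_apply, Pi.add_apply, Pi.mul_apply, Pi.pow_apply, Pi.div_apply]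
      beta_reduce
      rw [hq0, show ((3:ℝ)/2 - 1) = (1:ℝ)/2 by norm_num, hA32eq]
      push_cast
      ring
    -- the upper bound
    have hkey2 : φ (ρ θ₀ t₀) * deriv (deriv φ) (ρ θ₀ t₀) ≤ deriv φ (ρ θ₀ t₀) ^ 2 := by
      have := hβ _ hrin
      linarith
    have hA12nn : 0 ≤ (φ (ρ θ₀ t₀) ^ 2 + F1 (θ₀, t₀) ^ 2) ^ ((1:ℝ)/2) :=
      Real.rpow_nonneg hApos.le _
    have hfinal : 2 * F1 (θ₀, t₀) * deriv (fun θ => F2 (θ, t₀)) θ₀ ≤ 0 := by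
      rw [hclean.deriv, ← mul_div_assoc]
      apply div_nonpos_of_nonpos_of_nonneg
      · exact numerator_nonpos _ _ _ _ _ _ hφpos huc hkey2 hA12nn
      · exact sq_nonneg _
    -- contradiction
    rw [hmveq] at hlow
    linarith
  -- conclude from the key claim
  intro t ht
  have e1 : (fun θ : ℝ => (deriv (fun θ' => ρ θ' t) θ) ^ 2) = fun θ => (F1 (θ, t)) ^ 2 :=
    funext fun θ => by rw [h1 θ t ht]
  have e0 : (fun θ : ℝ => (deriv (fun θ' => ρ θ' 0) θ) ^ 2) = fun θ => (F1 (θ, 0)) ^ 2 :=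
    funext fun θ => by rw [h1 θ 0 ⟨le_refl 0, hTpos.le⟩]
  rw [e1, e0]
  exact ciSup_le fun θ => key t ht θ
end
end

section
/- Let φ : (0,R₀) → ℝ be a warp potential and let ρ : ℝ × I → (0,R₀) be a solution of the Guan–Li flow, 2π-periodic in θ, on an interval I. Then the enclosed area A(t) := ∫₀^{2π} Φ(ρ(θ,t)) dθ is constant in t. -/
open Real Set MeasureTheory Filter Topology

noncomputable section

def guanLiPhi (φ : ℝ → ℝ) : ℝ → ℝ := fun r => ∫ x in (0:ℝ)..r, φ x

lemma hasDerivAt_guanLi_ratio (F U : ℝ → ℝ) (θ f u q up : ℝ)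
    (hfθ : F θ = f) (huθ : U θ = u) (hfpos : 0 < f)
    (hF : HasDerivAt F (q * u) θ) (hU : HasDerivAt U up θ) :
    HasDerivAt (fun x => F x * U x / Real.sqrt (F x ^ 2 + U x ^ 2))
      ((f ^ 3 * up + q * u ^ 4) / ((f ^ 2 + u ^ 2) ^ ((3 : ℝ) / 2))) θ := by
  have hXpos : 0 < f ^ 2 + u ^ 2 := by positivity
  set s : ℝ := Real.sqrt (f ^ 2 + u ^ 2) with hs
  have hSpos : 0 < s := Real.sqrt_pos.mpr hXpos
  have hS2 : s ^ 2 = f ^ 2 + u ^ 2 := Real.sq_sqrt hXpos.le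
  have hXd : HasDerivAt (fun x => F x ^ 2 + U x ^ 2)
      (2 * f * (q * u) + 2 * u * up) θ := by
    have h : HasDerivAt (fun x => F x ^ 2 + U x ^ 2) _ θ := ((hF.pow 2).add (hU.pow 2))
    rw [hfθ, huθ] at h
    convert h using 1
    push_cast
    ring
  have hSd : HasDerivAt (fun x => Real.sqrt (F x ^ 2 + U x ^ 2))
      (1 / (2 * s) * (2 * f * (q * u) + 2 * u * up)) θ := by
    have hne : F θ ^ 2 + U θ ^ 2 ≠ 0 := by rw [hfθ, huθ]; exact hXpos.ne'
    have h := (Real.hasDerivAt_sqrt hne).comp θ hXd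
    rw [hfθ, huθ] at h
    simpa [Function.comp_def, ← hs] using h
  have hNd : HasDerivAt (fun x => F x * U x) (q * u * u + f * up) θ := by
    have h := hF.mul hU
    rw [hfθ, huθ] at h
    exact h
  have hd := hNd.div hSd (by rw [hfθ, huθ, ← hs]; exact hSpos.ne')
  rw [hfθ, huθ, ← hs] at hd
  have h32 : (f ^ 2 + u ^ 2) ^ ((3 : ℝ) / 2) = (f ^ 2 + u ^ 2) * s := by
    rw [show (3:ℝ)/2 = 1 + 1/2 by norm_num, Real.rpow_add hXpos, Real.rpow_one, hs,
      Real.sqrt_eq_rpow]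
  have hval : ((q * u * u + f * up) * s - f * u * (1 / (2 * s) * (2 * f * (q * u) + 2 * u * up))) / s ^ 2
      = (f ^ 3 * up + q * u ^ 4) / ((f ^ 2 + u ^ 2) * s) := by
    have h1 : ((q * u * u + f * up) * s - f * u * (1 / (2 * s) * (2 * f * (q * u) + 2 * u * up))) / s ^ 2
        = ((q * u * u + f * up) * s ^ 2 - f * u * (f * (q * u) + u * up)) / s ^ 3 := by
      field_simp
    rw [h1, hS2, show s ^ 3 = (f ^ 2 + u ^ 2) * s by rw [pow_succ, hS2],
      div_eq_div_iff (by positivity) (by positivity)]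
    ring
  rw [h32, ← hval]
  exact hd

set_option maxHeartbeats 2000000 in
/-- The enclosed area `A(t) = ∫₀^{2π} Φ(ρ(θ,t)) dθ`, where
`Φ(r) = ∫₀^r φ`, is constant along the Guan–Li flow. -/
theorem guanLi_area_constant
    (R₀ : EReal) (hR₀ : 0 < R₀) (φ : ℝ → ℝ) (hφ : IsWarpPotential R₀ φ)
    (hΦfin : ∀ r, InInterval R₀ r → IntervalIntegrable φ volume 0 r)
    (I : Set ℝ) (hI : I.OrdConnected) (ρ : ℝ → ℝ → ℝ)
    (hρ : IsGuanLiSolution R₀ φ I ρ) :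
    ∀ t₁ ∈ I, ∀ t₂ ∈ I,
      (∫ θ in (0 : ℝ)..(2 * π), ∫ x in (0 : ℝ)..(ρ θ t₁), φ x) =
      (∫ θ in (0 : ℝ)..(2 * π), ∫ x in (0 : ℝ)..(ρ θ t₂), φ x) := by
  obtain ⟨hmem, hper, hsm, hpde⟩ := hρ
  obtain ⟨hφsm, hφpos⟩ := hφ
  have hUopen : IsOpen {r : ℝ | InInterval R₀ r} := by
    have : {r : ℝ | InInterval R₀ r} = Ioi (0:ℝ) ∩ (fun r : ℝ => (r : EReal)) ⁻¹' (Iio R₀) := by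
      ext r; simp [InInterval, mem_Ioi]
    rw [this]
    exact isOpen_Ioi.inter (isOpen_Iio.preimage continuous_coe_real_ereal)
  have hΦderiv : ∀ r ∈ {r : ℝ | InInterval R₀ r}, HasDerivAt (guanLiPhi φ) (φ r) r := by
    intro r hr
    unfold guanLiPhi
    exact intervalIntegral.integral_hasDerivAt_right (hΦfin r hr)
      (hφsm.continuousOn.stronglyMeasurableAtFilter hUopen r hr)
      ((hφsm.continuousOn r hr).continuousAt (hUopen.mem_nhds hr))
  have hΦcont : ContinuousOn (guanLiPhi φ) {r : ℝ | InInterval R₀ r} := fun r hr =>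
    ((hΦderiv r hr).continuousAt).continuousWithinAt
  -- two-variable continuity
  have hcont2 : ContinuousOn (fun p : ℝ × ℝ => ρ p.1 p.2) (univ ×ˢ I) := hsm.continuousOn
  have hΨcont : ContinuousOn (fun p : ℝ × ℝ => guanLiPhi φ (ρ p.1 p.2)) (univ ×ˢ I) := by
    have h := hΦcont.comp hcont2 (fun p hp => hmem p.1 p.2 hp.2)
    exact h
  -- slice smoothness in θ
  have hslice : ∀ t ∈ I, ContDiff ℝ (⊤ : ℕ∞) (fun θ => ρ θ t) := by
    intro t ht
    rw [← contDiffOn_univ]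
    have hin : ContDiffOn ℝ (⊤ : ℕ∞) (fun θ : ℝ => ((θ, t) : ℝ × ℝ)) univ :=
      (contDiff_id.prodMk contDiff_const).contDiffOn
    have hmap : MapsTo (fun θ : ℝ => ((θ, t) : ℝ × ℝ)) univ (univ ×ˢ I) :=
      fun θ _ => ⟨mem_univ _, ht⟩
    have h := hsm.comp hin hmap
    exact h
  have hsliceΦcont : ∀ t ∈ I, Continuous (fun θ => guanLiPhi φ (ρ θ t)) := by
    intro t ht
    have h := hΦcont.comp_continuous (hslice t ht).continuous (fun θ => hmem θ t ht)
    exact h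
  have hArea : ∀ t : ℝ, (∫ θ in (0:ℝ)..(2 * π), ∫ x in (0:ℝ)..(ρ θ t), φ x) =
      ∫ θ in (0:ℝ)..(2 * π), guanLiPhi φ (ρ θ t) := by
    intro t
    simp only [guanLiPhi]
  suffices H : ∀ t₁ ∈ I, ∀ t₂ ∈ I, t₁ ≤ t₂ →
      (∫ θ in (0:ℝ)..(2 * π), guanLiPhi φ (ρ θ t₁)) =
      (∫ θ in (0:ℝ)..(2 * π), guanLiPhi φ (ρ θ t₂)) by
    intro t₁ ht₁ t₂ ht₂
    rw [hArea t₁, hArea t₂]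
    rcases le_total t₁ t₂ with h | h
    · exact H t₁ ht₁ t₂ ht₂ h
    · exact (H t₂ ht₂ t₁ ht₁ h).symm
  intro t₁ ht₁ t₂ ht₂ hle
  rcases eq_or_lt_of_le hle with rfl | hlt
  · rfl
  have hIcc : Icc t₁ t₂ ⊆ I := hI.out ht₁ ht₂
  have hIoo : Ioo t₁ t₂ ⊆ interior I :=
    isOpen_Ioo.subset_interior_iff.mpr (Ioo_subset_Icc_self.trans hIcc)
  -- continuity of g on Icc t₁ t₂
  have h2πpos : (0:ℝ) < 2 * π := by positivity
  have hIocIcc : Set.uIoc (0:ℝ) (2 * π) ⊆ Icc (0:ℝ) (2 * π) := by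
    rw [uIoc_of_le h2πpos.le]; exact Ioc_subset_Icc_self
  obtain ⟨C, hC⟩ := (isCompact_Icc.prod isCompact_Icc).exists_bound_of_continuousOn
    (hΨcont.mono ((prod_mono (subset_univ _) hIcc) :
      Icc (0:ℝ) (2 * π) ×ˢ Icc t₁ t₂ ⊆ univ ×ˢ I))
  have hgcont : ContinuousOn (fun t => ∫ θ in (0:ℝ)..(2 * π), guanLiPhi φ (ρ θ t)) (Icc t₁ t₂) := by
    intro x₀ hx₀
    apply intervalIntegral.continuousWithinAt_of_dominated_interval (bound := fun _ => C)
    · filter_upwards [self_mem_nhdsWithin] with x hx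
      exact ((hsliceΦcont x (hIcc hx))).aestronglyMeasurable
    · filter_upwards [self_mem_nhdsWithin] with x hx
      refine ae_of_all _ fun θ hθ => ?_
      exact hC (θ, x) ⟨hIocIcc hθ, hx⟩
    · exact intervalIntegrable_const
    · refine ae_of_all _ fun θ _ => ?_
      have hθc : ContinuousOn (fun x : ℝ => ((θ : ℝ), x)) (Icc t₁ t₂) :=
        (continuous_const.prodMk continuous_id).continuousOn
      have hc := hΨcont.comp hθc
        (fun x (hx : x ∈ Icc t₁ t₂) => (⟨mem_univ _, hIcc hx⟩ : ((θ, x) : ℝ × ℝ) ∈ univ ×ˢ I))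
      exact hc x₀ hx₀
  -- derivative of g is zero on the interior
  have hderiv0 : ∀ t0 ∈ Ioo t₁ t₂,
      HasDerivAt (fun t => ∫ θ in (0:ℝ)..(2 * π), guanLiPhi φ (ρ θ t)) 0 t0 := by
    intro t0 ht0
    have ht0I : t0 ∈ interior I := hIoo ht0
    have ht0mem : t0 ∈ I := interior_subset ht0I
    obtain ⟨δ, hδpos, hball⟩ := Metric.isOpen_iff.mp isOpen_interior t0 ht0I
    have hδ2 : 0 < δ / 2 := by positivity
    have hcb : Metric.closedBall t0 (δ / 2) ⊆ interior I :=
      (Metric.closedBall_subset_ball (by linarith)).trans hball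
    set E : ℝ → ℝ → ℝ :=
      fun θ x => fderiv ℝ (fun p : ℝ × ℝ => ρ p.1 p.2) (θ, x) (0, 1) with hE
    have hkey : ∀ θ : ℝ, ∀ x ∈ interior I, HasDerivAt (fun t => ρ θ t) (E θ x) x := by
      intro θ x hx
      have hnhds : univ ×ˢ I ∈ 𝓝 ((θ, x) : ℝ × ℝ) :=
        mem_of_superset ((isOpen_univ.prod isOpen_interior).mem_nhds ⟨mem_univ _, hx⟩)
          (prod_mono (subset_refl _) interior_subset)
      have hdiff : DifferentiableAt ℝ (fun p : ℝ × ℝ => ρ p.1 p.2) (θ, x) :=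
        (hsm.contDiffAt hnhds).differentiableAt (by simp)
      have hcurve : HasDerivAt (fun t : ℝ => ((θ : ℝ), t)) (((0:ℝ), (1:ℝ))) x :=
        (hasDerivAt_const x θ).prodMk (hasDerivAt_id x)
      exact hdiff.hasFDerivAt.comp_hasDerivAt x hcurve
    have hVopen : IsOpen ((univ : Set ℝ) ×ˢ interior I) := isOpen_univ.prod isOpen_interior
    have hF'cont : ContinuousOn (fun p : ℝ × ℝ => φ (ρ p.1 p.2) * E p.1 p.2)
        (univ ×ˢ interior I) := by
      have h1 : ContDiffOn ℝ (⊤ : ℕ∞) (fun p : ℝ × ℝ => ρ p.1 p.2) (univ ×ˢ interior I) :=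
        hsm.mono (prod_mono (subset_refl _) interior_subset)
      have h2 := h1.continuousOn_fderiv_of_isOpen hVopen (by simp)
      have hEc : ContinuousOn (fun p : ℝ × ℝ => E p.1 p.2) (univ ×ˢ interior I) := by
        simpa [hE] using h2.clm_apply continuousOn_const
      refine ContinuousOn.mul ?_ hEc
      have h := hφsm.continuousOn.comp (hcont2.mono (prod_mono (subset_refl _) interior_subset))
        (fun (p : ℝ × ℝ) (hp : p ∈ univ ×ˢ interior I) => hmem p.1 p.2 (interior_subset hp.2))
      exact h
    obtain ⟨C', hC'⟩ := (isCompact_Icc.prod (isCompact_closedBall t0 (δ / 2))).exists_bound_of_continuousOn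
      (hF'cont.mono (prod_mono (subset_univ _) hcb))
    have hmain := intervalIntegral.hasDerivAt_integral_of_dominated_loc_of_deriv_le
      (F := fun x θ => guanLiPhi φ (ρ θ x)) (F' := fun x θ => φ (ρ θ x) * E θ x)
      (x₀ := t0) (s := Metric.ball t0 (δ / 2)) (a := (0:ℝ)) (b := 2 * π) (bound := fun _ => C')
      (μ := volume) (Metric.ball_mem_nhds t0 hδ2) ?_ ?_ ?_ ?_ ?_ ?_
    case refine_1 =>
      filter_upwards [isOpen_interior.mem_nhds ht0I] with x hx
      exact (hsliceΦcont x (interior_subset hx)).aestronglyMeasurable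
    case refine_2 => exact (hsliceΦcont t0 ht0mem).intervalIntegrable 0 (2 * π)
    case refine_3 =>
      have h0 := hF'cont.comp_continuous
        ((continuous_id.prodMk continuous_const) : Continuous fun θ : ℝ => ((θ, t0) : ℝ × ℝ))
        (fun θ => (⟨mem_univ _, ht0I⟩ : ((θ, t0) : ℝ × ℝ) ∈ univ ×ˢ interior I))
      have : Continuous (fun θ => φ (ρ θ t0) * E θ t0) := h0
      exact this.aestronglyMeasurable
    case refine_4 =>
      refine ae_of_all _ fun θ hθ x hx => ?_
      exact hC' (θ, x) ⟨hIocIcc hθ, Metric.ball_subset_closedBall hx⟩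
    case refine_5 => exact intervalIntegrable_const
    case refine_6 =>
      refine ae_of_all _ fun θ hθ x hx => ?_
      have hxint : x ∈ interior I := hcb (Metric.ball_subset_closedBall hx)
      have h1 := hkey θ x hxint
      have h2 := hΦderiv (ρ θ x) (hmem θ x (interior_subset hxint))
      simpa [Function.comp_def] using h2.comp x h1
    -- now compute the integral of F' t0 and show it is zero
    have hDg : HasDerivAt (fun t => ∫ θ in (0:ℝ)..(2 * π), guanLiPhi φ (ρ θ t))
        (∫ θ in (0:ℝ)..(2 * π), φ (ρ θ t0) * E θ t0) t0 := hmain.2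
    -- setup for fixed time slice
    have hsl : ContDiff ℝ (⊤ : ℕ∞) (fun θ => ρ θ t0) := hslice t0 ht0mem
    have hslE : ContDiff ℝ ((⊤ : ℕ∞) : WithTop ℕ∞) (fun θ => ρ θ t0) := hsl.of_le (by simp)
    have hdρ := contDiff_infty_iff_deriv.mp hslE
    have hdu := contDiff_infty_iff_deriv.mp hdρ.2
    -- notation
    set rt : ℝ → ℝ := fun θ => ρ θ t0 with hrt
    set u : ℝ → ℝ := deriv rt with hu
    have hfder : ∀ θ : ℝ, HasDerivAt (fun θ' => φ (rt θ')) (deriv φ (rt θ) * u θ) θ := by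
      intro θ
      have hφd : HasDerivAt φ (deriv φ (rt θ)) (rt θ) :=
        (((hφsm.contDiffAt (hUopen.mem_nhds (hmem θ t0 ht0mem)))).differentiableAt
          (by simp)).hasDerivAt
      have hrtd : HasDerivAt rt (u θ) θ := (hdρ.1 θ).hasDerivAt
      simpa [Function.comp_def] using hφd.comp θ hrtd
    have hWeq : ∀ θ : ℝ, φ (ρ θ t0) * E θ t0 =
        (φ (rt θ) ^ 3 * deriv u θ + deriv φ (rt θ) * u θ ^ 4) /
          ((φ (rt θ) ^ 2 + u θ ^ 2) ^ ((3 : ℝ) / 2)) := by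
      intro θ
      have hpde' := hpde θ t0 ht0mem
      rw [derivWithin_of_mem_nhds (mem_interior_iff_mem_nhds.mp ht0I)] at hpde'
      have hEeq : E θ t0 = deriv (fun t' => ρ θ t') t0 := ((hkey θ t0 ht0I).deriv).symm
      rw [hEeq, hpde']
      have hfpos : 0 < φ (rt θ) := hφpos _ (hmem θ t0 ht0mem)
      have hXpos : (0:ℝ) < φ (rt θ) ^ 2 + u θ ^ 2 := by positivity
      have hrpos : (0:ℝ) < (φ (rt θ) ^ 2 + u θ ^ 2) ^ ((3 : ℝ) / 2) :=
        Real.rpow_pos_of_pos hXpos _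
      rw [show (fun θ' => ρ θ' t0) = rt from rfl]
      rw [show deriv rt = u from rfl]
      rw [show ρ θ t0 = rt θ from rfl]
      field_simp
    have hWcont : Continuous (fun θ => (φ (rt θ) ^ 3 * deriv u θ + deriv φ (rt θ) * u θ ^ 4) /
        ((φ (rt θ) ^ 2 + u θ ^ 2) ^ ((3 : ℝ) / 2))) := by
      have hrtc : Continuous rt := hsl.continuous
      have hφρ : Continuous (fun θ => φ (rt θ)) := by
        have h := hφsm.continuousOn.comp_continuous hrtc (fun θ => hmem θ t0 ht0mem)
        exact h
      have hqc : Continuous (fun θ => deriv φ (rt θ)) := by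
        have h := (hφsm.continuousOn_deriv_of_isOpen hUopen (by simp)).comp_continuous hrtc
          (fun θ => hmem θ t0 ht0mem)
        exact h
      have huc : Continuous u := hdu.1.continuous
      have hu'c : Continuous (deriv u) := hdu.2.continuous
      have hXc : Continuous (fun θ => (φ (rt θ) ^ 2 + u θ ^ 2) ^ ((3 : ℝ) / 2)) := by
        apply Continuous.rpow_const ((hφρ.pow 2).add (huc.pow 2))
        intro θ
        left
        have hfpos : 0 < φ (rt θ) := hφpos _ (hmem θ t0 ht0mem)
        exact (by positivity : (0:ℝ) < φ (rt θ) ^ 2 + u θ ^ 2).ne'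
      apply Continuous.div (((hφρ.pow 3).mul hu'c).add (hqc.mul (huc.pow 4))) hXc
      intro θ
      have hfpos : 0 < φ (rt θ) := hφpos _ (hmem θ t0 ht0mem)
      have : (0:ℝ) < (φ (rt θ) ^ 2 + u θ ^ 2) ^ ((3 : ℝ) / 2) :=
        Real.rpow_pos_of_pos (by positivity) _
      exact this.ne'
    -- the integrand is the θ-derivative of G
    have hG : ∀ θ : ℝ, HasDerivAt
        (fun θ' => φ (rt θ') * u θ' / Real.sqrt (φ (rt θ') ^ 2 + u θ' ^ 2))
        ((φ (rt θ) ^ 3 * deriv u θ + deriv φ (rt θ) * u θ ^ 4) /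
          ((φ (rt θ) ^ 2 + u θ ^ 2) ^ ((3 : ℝ) / 2))) θ := by
      intro θ
      exact hasDerivAt_guanLi_ratio (fun θ' => φ (rt θ')) u θ (φ (rt θ)) (u θ)
        (deriv φ (rt θ)) (deriv u θ) rfl rfl (hφpos _ (hmem θ t0 ht0mem))
        (hfder θ) ((hdu.1 θ).hasDerivAt)
    have hint0 : (∫ θ in (0:ℝ)..(2 * π), φ (ρ θ t0) * E θ t0) = 0 := by
      rw [intervalIntegral.integral_congr (g := fun θ =>
        (φ (rt θ) ^ 3 * deriv u θ + deriv φ (rt θ) * u θ ^ 4) /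
          ((φ (rt θ) ^ 2 + u θ ^ 2) ^ ((3 : ℝ) / 2))) (fun θ _ => hWeq θ)]
      rw [intervalIntegral.integral_eq_sub_of_hasDerivAt (fun θ _ => hG θ)
        (hWcont.intervalIntegrable 0 (2 * π))]
      -- periodicity
      have hperρ : ∀ θ : ℝ, rt (θ + 2 * π) = rt θ := fun θ => hper θ t0 ht0mem
      have hup : u (2 * π) = u 0 := by
        have hfun : (fun θ => rt (θ + 2 * π)) = rt := funext hperρ
        have : u (0 + 2 * π) = u 0 := by
          rw [hu, ← deriv_comp_add_const rt (2 * π) 0, hfun]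
        simpa using this
      have hrp : rt (2 * π) = rt 0 := by simpa using hperρ 0
      simp [hrp, hup]
    rw [hint0] at hDg
    exact hDg
  -- mean value theorem
  obtain ⟨c, hc, hc0⟩ := exists_hasDerivAt_eq_slope
    (fun t => ∫ θ in (0:ℝ)..(2 * π), guanLiPhi φ (ρ θ t)) (fun _ => (0:ℝ)) hlt hgcont
    (fun x hx => hderiv0 x hx)
  have h := hc0.symm
  rw [div_eq_iff (by intro hcon; apply absurd hcon; intro h'; linarith [sub_eq_zero.mp h'] : t₂ - t₁ ≠ 0)] at h
  have h2 : (∫ θ in (0:ℝ)..(2 * π), guanLiPhi φ (ρ θ t₂)) -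
      (∫ θ in (0:ℝ)..(2 * π), guanLiPhi φ (ρ θ t₁)) = 0 := by
    simpa using h
  linarith [h2]
end
end

section
/- Let ρ : ℝ → (0,∞) be a C¹ 2π-periodic function, let a, α ∈ ℝ, and define the radial graph γ(θ) := ρ(θ)(cos θ, sin θ) in ℝ². Suppose that for all θ, ρ'(θ) = a cos(θ + α) · √(ρ(θ)² + ρ'(θ)²) (i.e. r_s = a cos(θ+α) along the curve). Then the image of γ is a circle: there exist c ∈ ℝ² and R > 0 such that |γ(θ) − c| = R for all θ. -/
/-!
Squaring the equation at `θ = -α` gives `a² < 1`, and squaring it everywhere turns it into the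
linear equation `ρ' √(1 - a² cos² (θ + α)) = a cos (θ + α) ρ`. The polar function `g` of the unit
circle centred at `a (sin α, cos α)` is positive and solves the same equation, so `ρ / g` has
derivative zero and `ρ` is a constant multiple of `g`: a dilate of that circle.
-/

open Real

noncomputable section

/-- Polar equation `r = circlePolar a α θ` of the unit circle centred at `a • (sin α, cos α)`:
with `p = a sin (θ + α)` the projection of the centre on `(cos θ, sin θ)`, the ray meets the
circle at `r = p + √(1 - a² + p²)`. -/
def circlePolar (a α θ : ℝ) : ℝ :=
  a * sin (θ + α) + √(1 - a ^ 2 * cos (θ + α) ^ 2)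

lemma sq_eq_of_eq_mul_sqrt {x y b : ℝ} (h : y = b * √(x ^ 2 + y ^ 2)) :
    y ^ 2 = b ^ 2 * (x ^ 2 + y ^ 2) := by
  have h2 := congrArg (· ^ 2) h
  rwa [mul_pow, sq_sqrt (by positivity)] at h2

lemma sq_lt_one_of_eq_mul_sqrt {x y b : ℝ} (hx : x ≠ 0) (h : y = b * √(x ^ 2 + y ^ 2)) :
    b ^ 2 < 1 := by
  have hsq := sq_eq_of_eq_mul_sqrt h
  by_contra! hb
  nlinarith [sq_pos_of_ne_zero hx, sq_nonneg y]

lemma mul_sqrt_one_sub_sq_eq_of_eq_mul_sqrt {x y b : ℝ} (hx : 0 < x)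
    (h : y = b * √(x ^ 2 + y ^ 2)) : y * √(1 - b ^ 2) = b * x := by
  have hprod : (x ^ 2 + y ^ 2) * (1 - b ^ 2) = x ^ 2 := by
    linear_combination sq_eq_of_eq_mul_sqrt h
  have hs : √(x ^ 2 + y ^ 2) * √(1 - b ^ 2) = x := by
    rw [← sqrt_mul (by positivity), hprod, sqrt_sq hx.le]
  rw [h, mul_assoc, hs]

lemma one_sub_sq_mul_cos_sq_nonneg {a : ℝ} (ha : a ^ 2 ≤ 1) (x : ℝ) :
    0 ≤ 1 - a ^ 2 * cos x ^ 2 := by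
  nlinarith [cos_sq_le_one x, sq_nonneg (cos x)]

lemma one_sub_sq_mul_cos_sq_pos {a : ℝ} (ha : a ^ 2 < 1) (x : ℝ) :
    0 < 1 - a ^ 2 * cos x ^ 2 := by
  nlinarith [cos_sq_le_one x, sq_nonneg (cos x)]

section circlePolar

variable {a : ℝ} (α θ : ℝ)

lemma circlePolar_pos (ha : a ^ 2 < 1) : 0 < circlePolar a α θ := by
  have hW := one_sub_sq_mul_cos_sq_nonneg ha.le (θ + α)
  have hlt : (a * sin (θ + α)) ^ 2 < √(1 - a ^ 2 * cos (θ + α) ^ 2) ^ 2 := by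
    rw [sq_sqrt hW]
    nlinarith [sin_sq_add_cos_sq (θ + α), sq_nonneg (sin (θ + α))]
  have habs := abs_lt_of_sq_lt_sq hlt (sqrt_nonneg _)
  unfold circlePolar
  linarith [neg_abs_le (a * sin (θ + α))]

lemma hasDerivAt_circlePolar (ha : a ^ 2 < 1) :
    HasDerivAt (circlePolar a α)
      (a * cos (θ + α) * circlePolar a α θ / √(1 - a ^ 2 * cos (θ + α) ^ 2)) θ := by
  have hu := one_sub_sq_mul_cos_sq_pos ha (θ + α)
  have hshift : HasDerivAt (· + α) 1 θ := (hasDerivAt_id θ).add_const α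
  have hW := ((hshift.cos.pow 2).const_mul (a ^ 2)).const_sub 1 |>.sqrt hu.ne'
  simp only [Pi.pow_apply] at hW
  refine ((hshift.sin.const_mul a).add hW).congr_deriv ?_
  have hW₀ := (sqrt_pos.2 hu).ne'
  unfold circlePolar
  field_simp
  ring

lemma circlePolar_sq_dist (ha : a ^ 2 ≤ 1) (K : ℝ) :
    (K * circlePolar a α θ * cos θ - K * a * sin α) ^ 2
      + (K * circlePolar a α θ * sin θ - K * a * cos α) ^ 2 = K ^ 2 := by
  have hW : √(1 - a ^ 2 * cos (θ + α) ^ 2) ^ 2 = 1 - a ^ 2 * cos (θ + α) ^ 2 :=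
    sq_sqrt (one_sub_sq_mul_cos_sq_nonneg ha (θ + α))
  unfold circlePolar
  generalize √(1 - a ^ 2 * cos (θ + α) ^ 2) = W at hW ⊢
  rw [sin_add]
  rw [cos_add] at hW
  linear_combination K ^ 2 * hW
    + ((K * (a * (sin θ * cos α + cos θ * sin α) + W)) ^ 2
      - K ^ 2 * a ^ 2 * (sin α ^ 2 + cos α ^ 2)) * sin_sq_add_cos_sq θ

end circlePolar

lemma div_eq_div_of_deriv_mul_eq {f g f' g' : ℝ → ℝ} (hf : ∀ x, HasDerivAt f (f' x) x)
    (hg : ∀ x, HasDerivAt g (g' x) x) (hg₀ : ∀ x, g x ≠ 0) (h : ∀ x, f' x * g x = f x * g' x)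
    (x y : ℝ) : f x / g x = f y / g y := by
  have hquot (t : ℝ) : HasDerivAt (fun t => f t / g t) 0 t := by
    refine ((hf t).div (hg t) (hg₀ t)).congr_deriv ?_
    rw [h, sub_self, zero_div]
  exact is_const_of_deriv_eq_zero (fun t => (hquot t).differentiableAt)
    (fun t => (hquot t).deriv) x y

theorem euclidean_radial_graph_is_circle_general
    (ρ : ℝ → ℝ) (hρC1 : ContDiff ℝ 1 ρ)
    (hρpos : ∀ θ, 0 < ρ θ)
    (a α : ℝ)
    (hode : ∀ θ : ℝ,
      deriv ρ θ = a * Real.cos (θ + α) * Real.sqrt ((ρ θ) ^ 2 + (deriv ρ θ) ^ 2)) :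
    ∃ c₁ c₂ R : ℝ, 0 < R ∧ ∀ θ : ℝ,
      (ρ θ * Real.cos θ - c₁) ^ 2 + (ρ θ * Real.sin θ - c₂) ^ 2 = R ^ 2 := by
  have ha : a ^ 2 < 1 := by
    simpa using sq_lt_one_of_eq_mul_sqrt (hρpos (-α)).ne' (hode (-α))
  have hlin (θ : ℝ) : deriv ρ θ * √(1 - a ^ 2 * cos (θ + α) ^ 2) = a * cos (θ + α) * ρ θ := by
    rw [← mul_pow]
    exact mul_sqrt_one_sub_sq_eq_of_eq_mul_sqrt (hρpos θ) (hode θ)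
  have hratio (θ : ℝ) : ρ θ / circlePolar a α θ = ρ 0 / circlePolar a α 0 := by
    refine div_eq_div_of_deriv_mul_eq (fun t => (hρC1.differentiable one_ne_zero t).hasDerivAt)
      (hasDerivAt_circlePolar α · ha) (fun t => (circlePolar_pos α t ha).ne') (fun t => ?_) θ 0
    have hW₀ := (sqrt_pos.2 (one_sub_sq_mul_cos_sq_pos ha (t + α))).ne'
    field_simp
    linear_combination circlePolar a α t * hlin t
  set K := ρ 0 / circlePolar a α 0
  refine ⟨K * a * sin α, K * a * cos α, K, div_pos (hρpos 0) (circlePolar_pos α 0 ha),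
    fun θ => ?_⟩
  have hρ : ρ θ = K * circlePolar a α θ := by
    rw [← hratio θ, div_mul_cancel₀ _ (circlePolar_pos α θ ha).ne']
  rw [hρ]
  exact circlePolar_sq_dist α θ ha.le K

/-- A `C¹` radial graph `γ(θ) = ρ(θ)(cos θ, sin θ)` in `ℝ²` satisfying
`r_s = a cos(θ + α)`, i.e. `ρ' = a cos(θ+α) √(ρ² + ρ'²)`, is a (possibly translated)
circle. -/
theorem euclidean_radial_graph_is_circle
    (ρ : ℝ → ℝ) (hρC1 : ContDiff ℝ 1 ρ)
    (hρper : ∀ θ, ρ (θ + 2 * π) = ρ θ)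
    (hρpos : ∀ θ, 0 < ρ θ)
    (a α : ℝ)
    (hode : ∀ θ : ℝ,
      deriv ρ θ = a * Real.cos (θ + α) * Real.sqrt ((ρ θ) ^ 2 + (deriv ρ θ) ^ 2)) :
    ∃ c₁ c₂ R : ℝ, 0 < R ∧ ∀ θ : ℝ,
      (ρ θ * Real.cos θ - c₁) ^ 2 + (ρ θ * Real.sin θ - c₂) ^ 2 = R ^ 2 :=
  euclidean_radial_graph_is_circle_general ρ hρC1 hρpos a α hode
end
end
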